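/- arXiv:1702.05873 — 4 statements merged into one kernel-verified Lean document; each statement's English description precedes it below -/
import Mathlib

section
/- If a connected graph G of odd order satisfies odd(G - S) ≤ |S| for all nonempty vertex subsets S, then G is factor-critical, i.e., for every vertex x, G - x has a perfect matching. -/
/-!
Tutte's theorem reduces the claim to Tutte's condition for `G - x`. Deleting `u` from `G - x`
is deleting `u ∪ {x}` from `G`, which by hypothesis leaves at most `|u| + 1` odd components.
The number of odd components of a graph has the parity of its order, here
`|V| - |u| - 1 ≡ |u| (mod 2)` since `|V|` is odd; so there are at most `|u|` of them.
-/

open SimpleGraph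

/-- Number of odd components of the graph obtained from `G` by deleting `S`. -/
noncomputable def oddComp {V : Type*} (G : SimpleGraph V) (S : Set V) : ℕ :=
  Nat.card {C : (G.induce Sᶜ).ConnectedComponent // Odd (Nat.card C.supp)}

namespace SimpleGraph

variable {V V' : Type*} {G : SimpleGraph V} {G' : SimpleGraph V'}

lemma Iso.ncard_oddComponents (φ : G ≃g G') :
    G.oddComponents.ncard = G'.oddComponents.ncard := by
  rw [← Nat.card_coe_set_eq, ← Nat.card_coe_set_eq]
  refine Nat.card_congr (φ.connectedComponentEquiv.subtypeEquiv fun C => ?_)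
  simp only [Set.mem_ofPred_eq, ← Nat.card_coe_set_eq,
    Nat.card_congr (ConnectedComponent.isoEquivSupp φ C)]

lemma oddComp_eq_ncard_oddComponents (G : SimpleGraph V) (S : Set V) :
    oddComp G S = (G.induce Sᶜ).oddComponents.ncard := by
  rw [oddComp, ← Nat.card_coe_set_eq]
  simp only [Set.coe_ofPred, Nat.card_coe_set_eq]

lemma odd_oddComp_iff [Finite V] (G : SimpleGraph V) (S : Set V) :
    Odd (oddComp G S) ↔ Odd Sᶜ.ncard := by
  rw [oddComp_eq_ncard_oddComponents, odd_ncard_oddComponents, Nat.card_coe_set_eq]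

def induceDeleteVertsIso (W : Set V) (u : Set W) :
    ((⊤ : (G.induce W).Subgraph).deleteVerts u).coe ≃g G.induce (W \ Subtype.val '' u) where
  toFun p := ⟨p.1.1, p.1.2, by rintro ⟨w, hw, hwp⟩; exact p.2.2 (Subtype.ext hwp ▸ hw)⟩
  invFun q := ⟨⟨q.1, q.2.1⟩, trivial, fun h => q.2.2 ⟨_, h, rfl⟩⟩
  left_inv _ := rfl
  right_inv _ := rfl
  map_rel_iff' {p q} := by simp [p.2.2, q.2.2]

lemma ncard_oddComponents_deleteVerts_induce (W : Set V) (u : Set W) :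
    ((⊤ : (G.induce W).Subgraph).deleteVerts u).coe.oddComponents.ncard =
      oddComp G (Wᶜ ∪ Subtype.val '' u) := by
  rw [(induceDeleteVertsIso W u).ncard_oddComponents, oddComp_eq_ncard_oddComponents,
    Set.compl_union, compl_compl, Set.sdiff_eq_compl_inter, Set.inter_comm]

lemma not_isTutteViolator_induce_compl_singleton [Finite V] (hodd : Odd (Nat.card V))
    (h : ∀ S : Set V, S.Nonempty → oddComp G S ≤ S.ncard) (x : V) (u : Set ({x}ᶜ : Set V)) :
    ¬ (G.induce {x}ᶜ).IsTutteViolator u := by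
  set S : Set V := insert x (Subtype.val '' u)
  have hx : x ∉ Subtype.val '' u := fun ⟨w, _, hw⟩ => w.2 hw
  have hS : S.ncard = u.ncard + 1 := by
    rw [Set.ncard_insert_of_notMem hx, Set.ncard_image_of_injective _ Subtype.val_injective]
  have hSc : S.ncard + Sᶜ.ncard = Nat.card V := Set.ncard_add_ncard_compl S
  have hparity : oddComp G S % 2 = Sᶜ.ncard % 2 := by
    have := odd_oddComp_iff G S
    rw [Nat.odd_iff, Nat.odd_iff] at this
    omega
  have hle := h S (Set.insert_nonempty _ _)
  rw [IsTutteViolator, ncard_oddComponents_deleteVerts_induce, compl_compl,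
    Set.singleton_union, not_lt]
  change oddComp G S ≤ u.ncard
  rw [Nat.odd_iff] at hodd
  omega

lemma exists_isMatching_verts_eq_of_isPerfectMatching_induce {W : Set V}
    {M : (G.induce W).Subgraph} (hM : M.IsPerfectMatching) :
    ∃ M' : G.Subgraph, M'.IsMatching ∧ M'.verts = W :=
  ⟨M.map (Embedding.induce W).toHom, hM.1.map _ (Embedding.induce (G := G) W).injective,
    by simp only [Subgraph.map_verts, hM.2.verts_eq_univ, Set.image_univ]; exact Subtype.range_coe⟩

end SimpleGraph

theorem stmt_1_general {V : Type*} [Fintype V] (G : SimpleGraph V)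
    (hodd : Odd (Fintype.card V))
    (h : ∀ S : Set V, S.Nonempty → oddComp G S ≤ S.ncard) :
    ∀ x : V, ∃ M : G.Subgraph, M.IsMatching ∧ M.verts = {x}ᶜ := by
  intro x
  rw [← Nat.card_eq_fintype_card] at hodd
  obtain ⟨M, hM⟩ := (G.induce {x}ᶜ).tutte.2
    (G.not_isTutteViolator_induce_compl_singleton hodd h x)
  exact exists_isMatching_verts_eq_of_isPerfectMatching_induce hM

theorem stmt_1 {V : Type*} [Fintype V] (G : SimpleGraph V)
    (hconn : G.Connected) (hodd : Odd (Fintype.card V))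
    (h : ∀ S : Set V, S.Nonempty → oddComp G S ≤ S.ncard) :
    ∀ x : V, ∃ M : G.Subgraph, M.IsMatching ∧ M.verts = {x}ᶜ :=
  stmt_1_general G hodd h
end

section
/- If G is a factor-critical connected graph and u, v are adjacent vertices, then the union of a perfect matching of G - u, a perfect matching of G - v, and the edge uv contains a spanning subgraph of G whose components are each K₂ or a cycle, with at most one odd cycle. -/
open SimpleGraph

lemma even_card_of_invol {α : Type*} [DecidableEq α] (s : Finset α) (f : α → α)
    (hmem : ∀ a ∈ s, f a ∈ s) (hinv : ∀ a ∈ s, f (f a) = a) (hne : ∀ a ∈ s, f a ≠ a) :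
    Even s.card := by
  induction s using Finset.strongInduction with
  | _ s ih =>
    rcases s.eq_empty_or_nonempty with rfl | ⟨a, ha⟩
    · simp
    · have hfa := hmem a ha
      set t := s \ {a, f a} with ht
      have hts : t ⊂ s := by
        refine Finset.ssubset_iff_of_subset (Finset.sdiff_subset) |>.mpr ⟨a, ha, by simp [ht]⟩
      have hsub : ({a, f a} : Finset α) ⊆ s := by
        intro x hx; simp at hx; rcases hx with rfl | rfl <;> [exact ha; exact hfa]
      have hle := Finset.card_le_card hsub
      have hpair : ({a, f a} : Finset α).card = 2 := Finset.card_pair (Ne.symm (hne a ha))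
      have htcard : t.card + 2 = s.card := by
        rw [ht, Finset.card_sdiff_of_subset hsub, hpair]; omega
      have hft : ∀ b ∈ t, f b ∈ t := by
        intro b hb
        simp only [ht, Finset.mem_sdiff, Finset.mem_insert, Finset.mem_singleton] at hb ⊢
        push_neg at hb ⊢
        refine ⟨hmem b hb.1, ?_, ?_⟩
        · intro h; exact hb.2.2 (by rw [← congrArg f h, hinv b hb.1])
        · intro h
          exact hb.2.1 (by have := congrArg f h; rwa [hinv b hb.1, hinv a ha] at this)
      obtain ⟨k, hk⟩ := ih t hts hft (fun b hb => hinv b (Finset.sdiff_subset hb))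
        (fun b hb => hne b (Finset.sdiff_subset hb))
      exact ⟨k + 1, by omega⟩

lemma even_nat_card_of_invol {α : Type*} [Finite α] (f : α → α)
    (hinv : ∀ a, f (f a) = a) (hne : ∀ a, f a ≠ a) : Even (Nat.card α) := by
  classical
  have := Fintype.ofFinite α
  rw [Nat.card_eq_fintype_card, ← Finset.card_univ]
  exact even_card_of_invol _ f (by simp) (by simp [hinv]) (by simp [hne])

/-- Every component of the subgraph `F` is a `K₂` (all degrees one) or a
cycle (all degrees two). -/
def IsK2CycleFactor {V : Type*} {G : SimpleGraph V} (F : G.Subgraph) : Prop :=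
  F.IsSpanning ∧ ∀ C : F.coe.ConnectedComponent,
    (∀ v ∈ C.supp, Nat.card (F.neighborSet ↑v) = 1) ∨
    (∀ v ∈ C.supp, Nat.card (F.neighborSet ↑v) = 2)

/-- The number of components of `F` that are odd cycles. -/
noncomputable def oddCycleCount {V : Type*} {G : SimpleGraph V} (F : G.Subgraph) : ℕ :=
  Nat.card {C : F.coe.ConnectedComponent //
    (∀ v ∈ C.supp, Nat.card (F.neighborSet ↑v) = 2) ∧ Odd (Nat.card C.supp)}

theorem stmt_5 {V : Type*} [Fintype V] (G : SimpleGraph V) (hconn : G.Connected)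
    (hfc : ∀ x : V, ∃ M : G.Subgraph, M.IsMatching ∧ M.verts = {x}ᶜ)
    (u v : V) (huv : G.Adj u v)
    (Mu Mv : G.Subgraph) (hMu : Mu.IsMatching ∧ Mu.verts = {u}ᶜ)
    (hMv : Mv.IsMatching ∧ Mv.verts = {v}ᶜ) :
    ∃ F : G.Subgraph, F ≤ Mu ⊔ Mv ⊔ G.subgraphOfAdj huv ∧
      IsK2CycleFactor F ∧ oddCycleCount F ≤ 1 := by
  classical
  obtain ⟨hMu1, hMu2⟩ := hMu
  obtain ⟨hMv1, hMv2⟩ := hMv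
  have hne : u ≠ v := huv.ne
  set F : G.Subgraph := Mu ⊔ Mv ⊔ G.subgraphOfAdj huv with hF
  -- basic membership facts
  have huMu : u ∉ Mu.verts := by simp [hMu2]
  have hvMv : v ∉ Mv.verts := by simp [hMv2]
  have hmemMu : ∀ w, w ≠ u → w ∈ Mu.verts := by intro w hw; simp [hMu2, hw]
  have hmemMv : ∀ w, w ≠ v → w ∈ Mv.verts := by intro w hw; simp [hMv2, hw]
  -- partner functions
  have hMu1' : ∀ w, w ∈ Mu.verts → ∃ x, Mu.Adj w x ∧ ∀ y, Mu.Adj w y → y = x :=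
    fun w hw => hMu1 hw
  have hMv1' : ∀ w, w ∈ Mv.verts → ∃ x, Mv.Adj w x ∧ ∀ y, Mv.Adj w y → y = x :=
    fun w hw => hMv1 hw
  choose pu hpu hpuU using hMu1'
  choose pv hpv hpvU using hMv1'
  have hSpan : F.IsSpanning := by
    intro w
    rw [hF]
    by_cases hwu : w = u
    · exact Set.mem_union_left _ (Set.mem_union_right _
        (hmemMv w (by rw [hwu]; exact hne)))
    · exact Set.mem_union_left _ (Set.mem_union_left _ (hmemMu w hwu))
  -- adjacency in F
  have hNF : ∀ w x, F.Adj w x ↔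
      (Mu.Adj w x ∨ Mv.Adj w x ∨ (u = w ∧ v = x) ∨ (u = x ∧ v = w)) := by
    intro w x
    rw [hF]
    simp only [Subgraph.sup_adj, subgraphOfAdj_adj, Sym2.eq_iff]
    tauto
  -- neighbor sets
  have hNu : F.neighborSet u = {pv u (hmemMv u hne), v} := by
    ext x
    rw [Subgraph.mem_neighborSet, hNF, Set.mem_insert_iff, Set.mem_singleton_iff]
    constructor
    · rintro (h | h | ⟨-, hvx⟩ | ⟨-, hvu⟩)
      · exact absurd (Mu.edge_vert h) huMu
      · exact Or.inl (hpvU u (hmemMv u hne) x h)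
      · exact Or.inr hvx.symm
      · exact absurd hvu.symm hne
    · rintro (rfl | rfl)
      · exact Or.inr (Or.inl (hpv u (hmemMv u hne)))
      · exact Or.inr (Or.inr (Or.inl ⟨rfl, rfl⟩))
  have hNv : F.neighborSet v = {pu v (hmemMu v hne.symm), u} := by
    ext x
    rw [Subgraph.mem_neighborSet, hNF, Set.mem_insert_iff, Set.mem_singleton_iff]
    constructor
    · rintro (h | h | ⟨huv', -⟩ | ⟨hux, -⟩)
      · exact Or.inl (hpuU v (hmemMu v hne.symm) x h)
      · exact absurd (Mv.edge_vert h) hvMv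
      · exact absurd huv' hne
      · exact Or.inr hux.symm
    · rintro (rfl | rfl)
      · exact Or.inl (hpu v (hmemMu v hne.symm))
      · exact Or.inr (Or.inr (Or.inr ⟨rfl, rfl⟩))
  have hNw : ∀ w (h1 : w ≠ u) (h2 : w ≠ v),
      F.neighborSet w = {pu w (hmemMu w h1), pv w (hmemMv w h2)} := by
    intro w h1 h2
    ext x
    rw [Subgraph.mem_neighborSet, hNF, Set.mem_insert_iff, Set.mem_singleton_iff]
    constructor
    · rintro (h | h | ⟨huw, -⟩ | ⟨-, hvw⟩)
      · exact Or.inl (hpuU w (hmemMu w h1) x h)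
      · exact Or.inr (hpvU w (hmemMv w h2) x h)
      · exact absurd huw.symm h1
      · exact absurd hvw.symm h2
    · rintro (rfl | rfl)
      · exact Or.inl (hpu w (hmemMu w h1))
      · exact Or.inr (Or.inl (hpv w (hmemMv w h2)))
  -- partner of u in Mv is not v, etc.
  have hpv_u_ne : pv u (hmemMv u hne) ≠ v := fun h =>
    hvMv (h ▸ Mv.edge_vert (hpv u (hmemMv u hne)).symm)
  have hpu_v_ne : pu v (hmemMu v hne.symm) ≠ u := fun h =>
    huMu (h ▸ Mu.edge_vert (hpu v (hmemMu v hne.symm)).symm)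
  -- degrees
  have hdegu : Nat.card (F.neighborSet u) = 2 := by
    rw [Nat.card_coe_set_eq, hNu, Set.ncard_pair hpv_u_ne]
  have hdegv : Nat.card (F.neighborSet v) = 2 := by
    rw [Nat.card_coe_set_eq, hNv, Set.ncard_pair hpu_v_ne]
  have hdeg12 : ∀ w, Nat.card (F.neighborSet w) = 1 ∨ Nat.card (F.neighborSet w) = 2 := by
    intro w
    by_cases h1 : w = u
    · subst h1; exact Or.inr hdegu
    by_cases h2 : w = v
    · subst h2; exact Or.inr hdegv
    rw [Nat.card_coe_set_eq, hNw w h1 h2]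
    by_cases heq : pu w (hmemMu w h1) = pv w (hmemMv w h2)
    · rw [heq, Set.pair_eq_singleton, Set.ncard_singleton]; exact Or.inl rfl
    · exact Or.inr (Set.ncard_pair heq)
  clear_value F
  clear hF
  refine ⟨F, le_refl _, ⟨hSpan, ?_⟩, ?_⟩
  · -- dichotomy per component
    intro C
    by_cases hC : ∃ z ∈ C.supp, Nat.card (F.neighborSet (z : V)) = 1
    · obtain ⟨w, hw, h1⟩ := hC
      have hwu : (w : V) ≠ u := fun h => by rw [h, hdegu] at h1; omega
      have hwv : (w : V) ≠ v := fun h => by rw [h, hdegv] at h1; omega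
      set x := pu (w : V) (hmemMu _ hwu) with hx
      have hxy : pv (w : V) (hmemMv _ hwv) = x := by
        by_contra hne'
        rw [Nat.card_coe_set_eq, hNw _ hwu hwv,
          Set.ncard_pair (fun h => hne' (h.symm))] at h1
        omega
      have hNws : F.neighborSet (w : V) = {x} := by
        rw [hNw _ hwu hwv, hxy, Set.pair_eq_singleton]
      have hxMu : x ∈ Mu.verts := Mu.edge_vert (hpu (w : V) (hmemMu _ hwu)).symm
      have hxMv : x ∈ Mv.verts := by
        rw [← hxy]; exact Mv.edge_vert (hpv (w : V) (hmemMv _ hwv)).symm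
      have hxu : x ≠ u := fun h => huMu (h ▸ hxMu)
      have hxv : x ≠ v := fun h => hvMv (h ▸ hxMv)
      have hNxs : F.neighborSet x = {(w : V)} := by
        rw [hNw x hxu hxv]
        have e1 : pu x (hmemMu x hxu) = (w : V) :=
          (hpuU x (hmemMu x hxu) _ (hpu (w : V) (hmemMu _ hwu)).symm).symm
        have e2 : pv x (hmemMv x hxv) = (w : V) := by
          have hadj : Mv.Adj x (w : V) := by
            have := (hpv (w : V) (hmemMv _ hwv)).symm
            rwa [hxy] at this
          exact (hpvU x (hmemMv x hxv) _ hadj).symm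
        rw [e1, e2, Set.pair_eq_singleton]
      have hclosed : ∀ (a b : F.verts) (p : F.coe.Walk a b),
          (a : V) ∈ ({(w : V), x} : Set V) → (b : V) ∈ ({(w : V), x} : Set V) := by
        intro a b p
        induction p with
        | nil => exact id
        | @cons a' b' c' h p ih =>
          intro ha
          apply ih
          have hadj : F.Adj (a' : V) (b' : V) := h
          rcases ha with ha | ha
          · rw [ha] at hadj
            have : (b' : V) ∈ F.neighborSet (w : V) := hadj
            rw [hNws] at this
            exact Or.inr this
          · rw [ha] at hadj
            have : (b' : V) ∈ F.neighborSet x := hadj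
            rw [hNxs] at this
            exact Or.inl this
      left
      intro z hz
      have hz' : (z : V) ∈ ({(w : V), x} : Set V) := by
        rw [ConnectedComponent.mem_supp_iff] at hw hz
        obtain ⟨p⟩ := ConnectedComponent.exact (hw.trans hz.symm)
        exact hclosed w z p (Or.inl rfl)
      rcases hz' with h | h
      · rw [h]; exact h1
      · rw [h, Nat.card_coe_set_eq, hNxs, Set.ncard_singleton]
    · right
      intro z hz
      rcases hdeg12 (z : V) with h | h
      · exact absurd ⟨z, hz, h⟩ hC
      · exact h
  · -- at most one odd cycle
    have hkey : ∀ C : F.coe.ConnectedComponent,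
        (∀ z ∈ C.supp, Nat.card (F.neighborSet (z : V)) = 2) → Odd (Nat.card C.supp) →
        (⟨u, hSpan u⟩ : F.verts) ∈ C.supp := by
      intro C h2 hodd
      by_contra hu
      have hu' : ∀ z : C.supp, ((z : F.verts) : V) ≠ u := by
        intro z h
        exact hu (by rw [show (⟨u, hSpan u⟩ : F.verts) = (z : F.verts) from
          Subtype.ext h.symm]; exact z.2)
      have hfmem : ∀ z : C.supp,
          (⟨pu ((z : F.verts) : V) (hmemMu _ (hu' z)), hSpan _⟩ : F.verts) ∈ C.supp := by
        intro z
        have hadj : F.coe.Adj (z : F.verts) ⟨pu _ (hmemMu _ (hu' z)), hSpan _⟩ := by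
          show F.Adj _ _
          rw [hNF]
          exact Or.inl (hpu _ _)
        rw [ConnectedComponent.mem_supp_iff]
        have hz := (z : F.verts).2
        have hzm := z.2
        rw [ConnectedComponent.mem_supp_iff] at hzm
        exact (ConnectedComponent.sound hadj.symm.reachable).trans hzm
      let f : C.supp → C.supp := fun z =>
        ⟨⟨pu ((z : F.verts) : V) (hmemMu _ (hu' z)), hSpan _⟩, hfmem z⟩
      have hfinv : ∀ z, f (f z) = z := by
        intro z
        apply Subtype.ext; apply Subtype.ext
        show pu (pu _ _) _ = ((z : F.verts) : V)
        exact (hpuU _ _ _ (hpu _ (hmemMu _ (hu' z))).symm).symm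
      have hfne : ∀ z, f z ≠ z := by
        intro z h
        have hval : pu ((z : F.verts) : V) (hmemMu _ (hu' z)) = ((z : F.verts) : V) :=
          congrArg (fun t : C.supp => ((t : F.verts) : V)) h
        exact (Mu.adj_sub (hpu _ (hmemMu _ (hu' z)))).ne' hval
      have heven := even_nat_card_of_invol f hfinv hfne
      exact (Nat.not_even_iff_odd.mpr hodd) heven
    unfold oddCycleCount
    have hsub : Subsingleton {C : F.coe.ConnectedComponent //
        (∀ z ∈ C.supp, Nat.card (F.neighborSet (z : V)) = 2) ∧ Odd (Nat.card C.supp)} := by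
      constructor
      intro a b
      apply Subtype.ext
      have ha := (ConnectedComponent.mem_supp_iff _ _).mp (hkey a.1 a.2.1 a.2.2)
      have hb := (ConnectedComponent.mem_supp_iff _ _).mp (hkey b.1 b.2.1 b.2.2)
      rw [← ha, ← hb]
    rcases isEmpty_or_nonempty {C : F.coe.ConnectedComponent //
        (∀ z ∈ C.supp, Nat.card (F.neighborSet (z : V)) = 2) ∧ Odd (Nat.card C.supp)} with h | h
    · haveI := h
      rw [Nat.card_of_isEmpty]
      omega
    · obtain ⟨a⟩ := h
      haveI := uniqueOfSubsingleton a
      exact le_of_eq Nat.card_unique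
end

section
/- If a connected graph G has a nonempty vertex subset S' with ω(G − S') ≥ |S'| + 2, then there exists a set-valued function H : V(G) → {{1},{0,2}} with |H⁻¹(1)| even such that G has no H-factor. -/
/-!
Pick `|S'| + 2` components `K` of `G - S'` and a vertex `c_K` in each, and let `H` ask for degree
`1` exactly on `T = S' ∪ {c_K}`, a set of even size `2|S'| + 2`. In an `H`-factor `F` the only
vertex of odd degree inside a chosen `K` is `c_K`, so the degree sum over `K` is odd and `F` has an
edge leaving `K`; such an edge ends in `S'`. As the vertices of `S'` have `F`-degree `1`, distinct
components are sent to distinct vertices of `S'`, which is impossible.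
-/

open SimpleGraph Function

open Classical in
noncomputable def oneOrZeroTwo {V : Type*} (T : Set V) (v : V) : Set ℕ :=
  if v ∈ T then {1} else {0, 2}

section OneOrZeroTwo

variable {V : Type*} {T : Set V} {v : V} {k : ℕ}

theorem oneOrZeroTwo_eq_or (T : Set V) (v : V) :
    oneOrZeroTwo T v = {1} ∨ oneOrZeroTwo T v = {0, 2} := by
  unfold oneOrZeroTwo
  split_ifs <;> simp

theorem setOf_oneOrZeroTwo_eq_one (T : Set V) : {v | oneOrZeroTwo T v = {1}} = T := by
  have hne : ({0, 2} : Set ℕ) ≠ {1} := fun h => by simpa using (Set.ext_iff.1 h 0).1 (by simp)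
  ext v
  by_cases hv : v ∈ T <;> simp [oneOrZeroTwo, hv, hne]

theorem eq_one_of_mem_oneOrZeroTwo (hk : k ∈ oneOrZeroTwo T v) (hv : v ∈ T) : k = 1 := by
  simpa [oneOrZeroTwo, hv] using hk

theorem odd_iff_mem_of_mem_oneOrZeroTwo (hk : k ∈ oneOrZeroTwo T v) : Odd k ↔ v ∈ T := by
  by_cases hv : v ∈ T
  · simp_all [oneOrZeroTwo]
  · simp only [oneOrZeroTwo, hv, if_false, Set.mem_insert_iff, Set.mem_singleton_iff] at hk
    rcases hk with rfl | rfl <;> simp [hv]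

end OneOrZeroTwo

theorem Set.ncard_union_image_val_compl {V : Type*} [Finite V] (S : Set V) (R : Set ↥Sᶜ) :
    (S ∪ Subtype.val '' R).ncard = S.ncard + R.ncard := by
  have hdisj : Disjoint S (Subtype.val '' R) := Set.disjoint_right.2 fun _ ⟨y, _, hy⟩ => hy ▸ y.2
  rw [Set.ncard_union_eq hdisj, Set.ncard_image_of_injective _ Subtype.val_injective]

namespace SimpleGraph

variable {V : Type*}

section Degrees

variable [Fintype V] {F : SimpleGraph V} [DecidableRel F.Adj]

theorem even_sum_degree_of_forall_adj_mem {C : Set V} [DecidablePred (· ∈ C)]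
    (hC : ∀ v ∈ C, ∀ w, F.Adj v w → w ∈ C) : Even (∑ v with v ∈ C, F.degree v) := by
  have hdeg (v : C) : (F.induce C).degree v = F.degree v :=
    degree_induce_of_neighborSet_subset fun w hw => hC v v.2 w hw
  rw [Finset.sum_subtype _ fun _ => Finset.mem_filter_univ _,
    ← Finset.sum_congr rfl fun v _ => hdeg v, sum_degrees_eq_twice_card_edges]
  exact even_two_mul _

theorem exists_adj_notMem_of_odd_sum_degree {C : Set V} [DecidablePred (· ∈ C)]
    (h : Odd (∑ v with v ∈ C, F.degree v)) : ∃ v ∈ C, ∃ w ∉ C, F.Adj v w := by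
  by_contra! hC
  exact Nat.not_even_iff_odd.2 h <| even_sum_degree_of_forall_adj_mem fun v hv w hvw =>
    by_contra fun hw => hC v hv w hw hvw

theorem eq_of_adj_of_degree_eq_one {w a b : V} (hw : F.degree w = 1) (ha : F.Adj w a)
    (hb : F.Adj w b) : a = b :=
  (degree_eq_one_iff_existsUnique_adj.1 hw).unique ha hb

theorem card_le_ncard_of_degree_eq_one {ι : Type*} [Fintype ι] {S : Set V} {C : ι → Set V}
    [∀ i, DecidablePred (· ∈ C i)] (hC : Pairwise (Disjoint on C))
    (hS : ∀ w ∈ S, F.degree w = 1) (hout : ∀ i, ∀ v ∈ C i, ∀ w ∉ C i, F.Adj v w → w ∈ S)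
    (hodd : ∀ i, Odd (∑ v with v ∈ C i, F.degree v)) : Fintype.card ι ≤ S.ncard := by
  choose v hv w hw hadj using fun i => exists_adj_notMem_of_odd_sum_degree (hodd i)
  have hwS i : w i ∈ S := hout i _ (hv i) _ (hw i) (hadj i)
  have hinj : Injective fun i => (⟨w i, hwS i⟩ : S) := by
    intro i j hij
    have hwij : w i = w j := congrArg Subtype.val hij
    have hvij : v i = v j := eq_of_adj_of_degree_eq_one (hS _ (hwS i)) (hadj i).symm
      (hwij ▸ (hadj j).symm)
    by_contra hne
    exact Set.disjoint_left.1 (hC hne) (hv i) (hvij ▸ hv j)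
  simpa [Nat.card_eq_fintype_card] using Nat.card_le_card_of_injective _ hinj

end Degrees

namespace ConnectedComponent

variable {G : SimpleGraph V} {S : Set V}

theorem mem_of_adj_of_notMem_image_val_supp (K : (G.induce Sᶜ).ConnectedComponent) {v w : V}
    (hv : v ∈ Subtype.val '' K.supp) (hvw : G.Adj v w) (hw : w ∉ Subtype.val '' K.supp) :
    w ∈ S := by
  by_contra hwS
  obtain ⟨v, hv, rfl⟩ := hv
  exact hw ⟨⟨w, hwS⟩, K.mem_supp_of_adj_mem_supp hv (induce_adj.2 hvw), rfl⟩

theorem pairwise_disjoint_image_val_supp :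
    Pairwise (Disjoint on fun K : (G.induce Sᶜ).ConnectedComponent => Subtype.val '' K.supp) :=
  fun _ _ hne => (Set.disjoint_image_iff Subtype.val_injective).2
    (pairwise_disjoint_supp_connectedComponent _ hne)

namespace Represents

variable {R : Set ↥Sᶜ} {Q : Set (G.induce Sᶜ).ConnectedComponent}

theorem exists_image_val_supp_inter_union_eq_singleton (hR : Represents R Q)
    {K : (G.induce Sᶜ).ConnectedComponent} (hK : K ∈ Q) :
    ∃ x : V, Subtype.val '' K.supp ∩ (S ∪ Subtype.val '' R) = {x} := by
  obtain ⟨x, hx⟩ := hR.exists_inter_eq_singleton hK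
  have hS : Subtype.val '' K.supp ∩ S = ∅ :=
    Set.disjoint_iff_inter_eq_empty.1 <| Set.disjoint_left.2 fun _ ⟨y, _, hy⟩ => hy ▸ y.2
  refine ⟨x, ?_⟩
  rw [Set.inter_union_distrib_left, hS, Set.empty_union, Set.inter_comm,
    ← Set.image_inter Subtype.val_injective, hx, Set.image_singleton]

theorem not_exists_oneOrZeroTwo_factor [Fintype V] (hR : Represents R Q)
    (hQ : S.ncard < Q.ncard) :
    ¬ ∃ F : SimpleGraph V, F ≤ G ∧
      ∀ v, Nat.card (F.neighborSet v) ∈ oneOrZeroTwo (S ∪ Subtype.val '' R) v := by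
  classical
  rintro ⟨F, hFG, hF⟩
  have hdeg (v : V) : F.degree v ∈ oneOrZeroTwo (S ∪ Subtype.val '' R) v := by
    rw [← card_neighborSet_eq_degree, ← Nat.card_eq_fintype_card]
    exact hF v
  refine hQ.not_ge ?_
  rw [← Nat.card_coe_set_eq, Nat.card_eq_fintype_card]
  refine card_le_ncard_of_degree_eq_one (C := fun K : Q => Subtype.val '' K.1.supp)
    (pairwise_disjoint_image_val_supp.comp_of_injective Subtype.val_injective)
    (fun w hw => eq_one_of_mem_oneOrZeroTwo (hdeg w) (Or.inl hw))
    (fun K v hv w hw hvw => K.1.mem_of_adj_of_notMem_image_val_supp hv (hFG hvw) hw)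
    fun K => ?_
  obtain ⟨x, hx⟩ := hR.exists_image_val_supp_inter_union_eq_singleton K.2
  rw [Finset.odd_sum_iff_odd_card_odd, Finset.card_eq_one.2 ⟨x, ?_⟩]
  · exact odd_one
  ext v
  simpa [odd_iff_mem_of_mem_oneOrZeroTwo (hdeg v)] using Set.ext_iff.1 hx v

end Represents

end ConnectedComponent

end SimpleGraph

theorem stmt_14_general {V : Type*} [Fintype V] (G : SimpleGraph V)
    (S' : Set V)
    (h : S'.ncard + 2 ≤ Nat.card (G.induce S'ᶜ).ConnectedComponent) :
    ∃ H : V → Set ℕ, (∀ v, H v = {1} ∨ H v = {0, 2}) ∧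
      Even (Nat.card {v : V | H v = {1}}) ∧
      ¬ ∃ F : SimpleGraph V, F ≤ G ∧ ∀ v : V, Nat.card (F.neighborSet v) ∈ H v := by
  obtain ⟨Q, -, hQ⟩ := Set.exists_subset_card_eq
    (s := (Set.univ : Set (G.induce S'ᶜ).ConnectedComponent)) (n := S'.ncard + 2)
    (by rwa [Set.ncard_univ])
  have hR := ConnectedComponent.Represents.image_out Q
  refine ⟨oneOrZeroTwo (S' ∪ Subtype.val '' (Quot.out '' Q)), oneOrZeroTwo_eq_or _, ?_,
    hR.not_exists_oneOrZeroTwo_factor (by omega)⟩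
  rw [setOf_oneOrZeroTwo_eq_one, Nat.card_coe_set_eq, Set.ncard_union_image_val_compl,
    hR.ncard_eq, hQ]
  exact ⟨S'.ncard + 1, by ring⟩

theorem stmt_14 {V : Type*} [Fintype V] (G : SimpleGraph V) (hconn : G.Connected)
    (S' : Set V) (hne : S'.Nonempty)
    (h : S'.ncard + 2 ≤ Nat.card (G.induce S'ᶜ).ConnectedComponent) :
    ∃ H : V → Set ℕ, (∀ v, H v = {1} ∨ H v = {0, 2}) ∧
      Even (Nat.card {v : V | H v = {1}}) ∧
      ¬ ∃ F : SimpleGraph V, F ≤ G ∧ ∀ v : V, Nat.card (F.neighborSet v) ∈ H v :=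
  stmt_14_general G S' h
end

section
/- If a connected graph G has a nonempty vertex subset S' with ω(G − S') ≥ |S'| + 1, then there exist a set-valued function H : V(G) → {{1},{0,2}} with |H⁻¹(1)| odd and a vertex x ∈ S' such that G^x has no H^x-factor; in particular G is not H-critical. -/
/-!
Let `k = |S'|` and pick vertices `t₀, …, t_k` in `k + 1` distinct components of `G - S'`. Put
`H = {1}` on `S'` and on the `tᵢ` and `H = {0, 2}` elsewhere, so that `2k + 1` vertices get `{1}`.
Take `x ∈ S'` and suppose `F` is an `H^x`-factor of `G^x`. Then the pendant edge `x x'` is the only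
edge of `F` at `x`. The component of `tᵢ` has odd `F`-degree sum, so some edge of `F` leaves it, and
this edge can only end in `S' \ {x}`. Since every vertex of `S'` has `F`-degree one, distinct
components reach distinct vertices, and so `k + 1 ≤ k - 1`.
-/

open SimpleGraph


/-- `G^x`: the graph obtained from `G` by adding a new pendant vertex (`none`)
adjacent only to `x`. -/
def addPendant {V : Type*} (G : SimpleGraph V) (x : V) : SimpleGraph (Option V) where
  Adj a b := (∃ a' b', a = some a' ∧ b = some b' ∧ G.Adj a' b') ∨
    (a = some x ∧ b = none) ∨ (a = none ∧ b = some x)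
  symm := by
    constructor
    rintro a b (⟨a', b', rfl, rfl, h⟩ | ⟨rfl, rfl⟩ | ⟨rfl, rfl⟩)
    · exact Or.inl ⟨b', a', rfl, rfl, h.symm⟩
    · exact Or.inr (Or.inr ⟨rfl, rfl⟩)
    · exact Or.inr (Or.inl ⟨rfl, rfl⟩)
  loopless := by
    constructor
    rintro a (⟨a', b', rfl, hb, h⟩ | ⟨rfl, hb⟩ | ⟨rfl, hb⟩)
    · injection hb with hb; subst hb; exact G.irrefl h
    · cases hb
    · cases hb

open Function Finset

theorem Function.exists_injective_comp_of_le_natCard {U β : Type*} [Finite β] {f : U → β}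
    (hf : Surjective f) {n : ℕ} (hn : n ≤ Nat.card β) : ∃ t : Fin n → U, Injective (f ∘ t) := by
  have := Fintype.ofFinite β
  obtain ⟨e⟩ := Embedding.nonempty_of_card_le (α := Fin n) (β := β)
    (by rwa [Fintype.card_fin, ← Nat.card_eq_fintype_card])
  exact ⟨surjInv hf ∘ e, by simpa [comp_def, surjInv_eq hf] using e.injective⟩

namespace SimpleGraph

section Parity

variable {W : Type*} [Fintype W] (F : SimpleGraph W) [DecidableRel F.Adj]

theorem exists_adj_notMem_of_odd_sum_degree_s15 (s : Finset W)
    (hs : Odd (∑ v ∈ s, F.degree v)) : ∃ v ∈ s, ∃ w ∉ s, F.Adj v w := by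
  classical
  by_contra! hclosed
  -- `convert` reconciles the `Fintype` instances on `↥s` viewed as a `Finset` and as a `Set`.
  have hdeg (v : s) : (F.induce s).degree v = F.degree v := by
    convert degree_induce_of_neighborSet_subset fun w hw =>
      by_contra fun hws => hclosed v v.2 w hws hw
  have hsum : ∑ v : s, (F.induce s).degree v = 2 * #(F.induce s).edgeFinset := by
    convert (F.induce (s : Set W)).sum_degrees_eq_twice_card_edges
  rw [Fintype.sum_congr _ _ hdeg, Finset.sum_coe_sort s (fun v => F.degree v)] at hsum
  exact Nat.not_even_iff_odd.mpr hs ⟨_, hsum.trans (two_mul _)⟩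

theorem card_le_card_of_odd_sum_degree {ι : Type*} [Fintype ι] (C : ι → Finset W)
    (hC : Pairwise (Disjoint on C)) (hodd : ∀ i, Odd (∑ v ∈ C i, F.degree v))
    (S : Finset W) (hS : ∀ s ∈ S, F.degree s = 1)
    (hout : ∀ i, ∀ v ∈ C i, ∀ w ∉ C i, F.Adj v w → w ∈ S) :
    Fintype.card ι ≤ #S := by
  choose v hv w hw hadj using fun i => F.exists_adj_notMem_of_odd_sum_degree_s15 (C i) (hodd i)
  have hwS i : w i ∈ S := hout i (v i) (hv i) (w i) (hw i) (hadj i)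
  suffices Injective w from card_le_card_of_injOn w (fun i _ => hwS i) this.injOn
  intro i j hij
  obtain ⟨u, -, hu⟩ := degree_eq_one_iff_existsUnique_adj.mp (hS _ (hwS j))
  have hvv : v i = v j := (hu _ (hij ▸ (hadj i).symm)).trans (hu _ (hadj j).symm).symm
  by_contra hne
  exact Finset.disjoint_left.mp (hC hne) (hv i) (hvv ▸ hv j)

end Parity

section Pendant

variable {V : Type*} {G : SimpleGraph V} {x : V}

@[simp]
theorem addPendant_adj_some_some {a b : V} :
    (addPendant G x).Adj (some a) (some b) ↔ G.Adj a b := by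
  simp [addPendant]

@[simp]
theorem addPendant_adj_none_left {a : Option V} : (addPendant G x).Adj none a ↔ a = some x := by
  simp [addPendant]

@[simp]
theorem addPendant_adj_some_none {a : V} : (addPendant G x).Adj (some a) none ↔ a = x := by
  simp [addPendant]

variable [Fintype V] {F : SimpleGraph (Option V)} [DecidableRel F.Adj]

theorem adj_none_some_of_le_addPendant (hF : F ≤ addPendant G x) (hnone : F.degree none = 1) :
    F.Adj none (some x) := by
  obtain ⟨w, hw, -⟩ := degree_eq_one_iff_existsUnique_adj.mp hnone
  obtain rfl := addPendant_adj_none_left.mp (hF hw)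
  exact hw

theorem exists_adj_of_le_addPendant (hF : F ≤ addPendant G x) (hnone : F.degree none = 1)
    (hx : F.degree (some x) = 1) {v : V} (hv : v ≠ x) {w : Option V} (h : F.Adj (some v) w) :
    ∃ b ≠ x, w = some b ∧ G.Adj v b := by
  cases w with
  | none => exact absurd (addPendant_adj_some_none.mp (hF h)) hv
  | some b =>
    refine ⟨b, ?_, rfl, addPendant_adj_some_some.mp (hF h)⟩
    rintro rfl
    obtain ⟨u, -, hu⟩ := degree_eq_one_iff_existsUnique_adj.mp hx
    cases (hu _ h.symm).trans (hu _ (adj_none_some_of_le_addPendant hF hnone).symm).symm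

end Pendant

section Obstruction

variable {V : Type*} [Fintype V] {G : SimpleGraph V} {S : Set V}

theorem lt_ncard_of_le_addPendant {x : V} (hx : x ∈ S) {n : ℕ} (t : Fin n → ↥Sᶜ)
    (ht : Injective ((G.induce Sᶜ).connectedComponentMk ∘ t))
    {F : SimpleGraph (Option V)} [DecidableRel F.Adj] (hF : F ≤ addPendant G x)
    (hnone : F.degree none = 1) (hS : ∀ v ∈ S, F.degree (some v) = 1)
    (ht1 : ∀ i, F.degree (some (t i : V)) = 1)
    (heven : ∀ v ∉ S, v ∉ Set.range (fun i => (t i : V)) → Even (F.degree (some v))) :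
    n < S.ncard := by
  classical
  set G' := G.induce Sᶜ
  let emb : ↥Sᶜ ↪ Option V := (Embedding.subtype _).trans Embedding.some
  let D i : Finset ↥Sᶜ := {v | G'.connectedComponentMk v = G'.connectedComponentMk (t i)}
  have hdisj : Pairwise (Disjoint on fun i => (D i).map emb) := fun i j hij =>
    (disjoint_map emb).mpr <| disjoint_filter.mpr fun v _ hi hj => hij (ht (hi.symm.trans hj))
  have hodd i : Odd (∑ a ∈ (D i).map emb, F.degree a) := by
    have hti : t i ∈ D i := by simp [D]
    rw [sum_map, ← add_sum_erase _ _ hti]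
    refine (ht1 i ▸ odd_one).add_even (even_sum _ fun v hv => heven v v.2 ?_)
    rintro ⟨j, hj⟩
    obtain ⟨hvi, hv⟩ := mem_erase.mp hv
    obtain rfl : t j = v := Subtype.ext hj
    exact hvi (congrArg t (ht (mem_filter.mp hv).2))
  have hout i : ∀ a ∈ (D i).map emb, ∀ w ∉ (D i).map emb, F.Adj a w →
      w ∈ (S \ {x}).toFinset.map Embedding.some := by
    rintro _ ha w hw hvw
    obtain ⟨v, hv, rfl⟩ := mem_map.mp ha
    obtain ⟨b, hbx, rfl, hvb⟩ :=
      exists_adj_of_le_addPendant hF hnone (hS x hx) (ne_of_mem_of_not_mem hx v.2).symm hvw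
    by_cases hb : b ∈ S
    · simp [hb, hbx]
    · refine (hw (mem_map.mpr ⟨⟨b, hb⟩, mem_filter.mpr ⟨mem_univ _, ?_⟩, rfl⟩)).elim
      exact (ConnectedComponent.sound (show G'.Adj v ⟨b, hb⟩ from hvb).reachable).symm.trans
        (mem_filter.mp hv).2
  have hdeg : ∀ s ∈ (S \ {x}).toFinset.map Embedding.some, F.degree s = 1 := by
    rintro _ hs
    obtain ⟨v, hv, rfl⟩ := mem_map.mp hs
    exact hS v (Set.mem_toFinset.mp hv).1
  have hcard := F.card_le_card_of_odd_sum_degree _ hdisj hodd _ hdeg hout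
  rw [Fintype.card_fin, card_map, ← Set.ncard_eq_toFinset_card',
    Set.ncard_sdiff_singleton_of_mem hx] at hcard
  have := (Set.ncard_pos (Set.toFinite S)).mpr ⟨x, hx⟩
  omega

end Obstruction

end SimpleGraph

theorem natCard_setOf_ite_eq_singleton_one {V : Type*} (A : Set V) [DecidablePred (· ∈ A)] :
    Nat.card {v | (if v ∈ A then {1} else {0, 2} : Set ℕ) = {1}} = A.ncard := by
  have h02 : ({0, 2} : Set ℕ) ≠ {1} := fun h => by simpa using congrArg (0 ∈ ·) h
  suffices {v | (if v ∈ A then {1} else {0, 2} : Set ℕ) = {1}} = A by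
    rw [this, Nat.card_coe_set_eq]
  ext v
  by_cases hv : v ∈ A <;> simp [hv, h02]

theorem stmt_15_general {V : Type*} [Fintype V] (G : SimpleGraph V)
    (S' : Set V) (hne : S'.Nonempty)
    (h : S'.ncard + 1 ≤ Nat.card (G.induce S'ᶜ).ConnectedComponent) :
    ∃ H : V → Set ℕ, (∀ v, H v = {1} ∨ H v = {0, 2}) ∧
      Odd (Nat.card {v : V | H v = {1}}) ∧
      ∃ x ∈ S', ¬ ∃ F : SimpleGraph (Option V), F ≤ addPendant G x ∧
        ∀ v : Option V, Nat.card (F.neighborSet v) ∈ v.elim ({1} : Set ℕ) H := by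
  classical
  obtain ⟨t, ht⟩ := exists_injective_comp_of_le_natCard
    (fun C => C.ind fun v => ⟨v, rfl⟩ : Surjective (G.induce S'ᶜ).connectedComponentMk) h
  set T := Set.range fun i => (t i : V)
  have hT : T.ncard = S'.ncard + 1 :=
    (Set.ncard_range_of_injective (Subtype.val_injective.comp ht.of_comp)).trans (Nat.card_fin _)
  have hdisj : Disjoint S' T := Set.disjoint_right.mpr (by rintro _ ⟨i, rfl⟩; exact (t i).2)
  obtain ⟨x, hx⟩ := hne
  let H v : Set ℕ := if v ∈ S' ∪ T then {1} else {0, 2}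
  refine ⟨H, fun v => ite_eq_or_eq _ _ _, ?_, x, hx, ?_⟩
  · rw [natCard_setOf_ite_eq_singleton_one, Set.ncard_union_eq hdisj, hT]
    exact ⟨S'.ncard, by ring⟩
  rintro ⟨F, hF, hfac⟩
  have hdeg v : F.degree v ∈ v.elim {1} H := by
    simpa only [Nat.card_eq_fintype_card, card_neighborSet_eq_degree] using hfac v
  have hone v (hv : v ∈ S' ∪ T) : F.degree (some v) = 1 := by
    simpa only [Option.elim_some, H, if_pos hv, Set.mem_singleton_iff] using hdeg (some v)
  have heven v (hv : v ∉ S' ∪ T) : Even (F.degree (some v)) := by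
    have h02 := hdeg (some v)
    simp only [Option.elim_some, H, if_neg hv, Set.mem_insert_iff, Set.mem_singleton_iff] at h02
    rcases h02 with h | h <;> simp [h]
  have := lt_ncard_of_le_addPendant hx t ht hF (hdeg none) (fun v hv => hone v (.inl hv))
    (fun i => hone _ (.inr ⟨i, rfl⟩)) (fun v hvS hvT => heven v fun hv => hv.elim hvS hvT)
  omega

theorem stmt_15 {V : Type*} [Fintype V] (G : SimpleGraph V) (hconn : G.Connected)
    (S' : Set V) (hne : S'.Nonempty)
    (h : S'.ncard + 1 ≤ Nat.card (G.induce S'ᶜ).ConnectedComponent) :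
    ∃ H : V → Set ℕ, (∀ v, H v = {1} ∨ H v = {0, 2}) ∧
      Odd (Nat.card {v : V | H v = {1}}) ∧
      ∃ x ∈ S', ¬ ∃ F : SimpleGraph (Option V), F ≤ addPendant G x ∧
        ∀ v : Option V, Nat.card (F.neighborSet v) ∈ v.elim ({1} : Set ℕ) H :=
  stmt_15_general G S' hne h
end
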